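/- arXiv:2205.03253 — 3 statements merged into one kernel-verified Lean document; each statement's English description precedes it below -/
import Mathlib

section
/- Let K be a finite simplicial complex, f an injective filtration function on K, and σ₁, σ₂ two distinct n-dimensional simplices of K. If for some ε > 0 we have f(σ₁) < f(σ₂) < f(σ₁) + 2ε, then there exists an injective filtration function g on K with ‖f − g‖_∞ ≤ ε and g(σ₂) < g(σ₁). -/
open scoped BigOperators

/-- A finite simplicial complex on vertex type `V`: a finite family of nonempty
finite vertex sets closed under passing to nonempty subsets. -/
structure SComplex (V : Type*) where
  faces : Finset (Finset V)
  nonempty_of_mem : ∀ s ∈ faces, s.Nonempty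
  down_closed : ∀ s ∈ faces, ∀ t ⊆ s, t.Nonempty → t ∈ faces

variable {V : Type*} [LinearOrder V]

/-- `f` is an injective filtration function on `K`: face-monotone and injective on faces. -/
def IsInjFiltration (K : SComplex V) (f : Finset V → ℝ) : Prop :=
  (∀ s ∈ K.faces, ∀ t ∈ K.faces, s ⊆ t → f s ≤ f t) ∧
  (∀ s ∈ K.faces, ∀ t ∈ K.faces, f s = f t → s = t)

/-- The sup-distance between `f` and `g` over the faces of `K` is at most `ε`. -/
def DistLE (K : SComplex V) (f g : Finset V → ℝ) (ε : ℝ) : Prop :=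
  ∀ s ∈ K.faces, |f s - g s| ≤ ε

/-- The sublevel subcomplex `K^f_r = f⁻¹((-∞, r])`. -/
noncomputable def sublevel (K : SComplex V) (f : Finset V → ℝ) (r : ℝ) : Finset (Finset V) :=
  K.faces.filter (fun s => f s ≤ r)

variable (𝔽 : Type*) [Field 𝔽]

/-- The simplicial boundary operator on chains (finitely supported functions on
simplices), with signs determined by the linear order on vertices. -/
noncomputable def bdry : (Finset V →₀ 𝔽) →ₗ[𝔽] (Finset V →₀ 𝔽) :=
  Finsupp.lsum 𝔽 (fun s => ∑ x ∈ s,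
    ((-1 : 𝔽) ^ (s.filter (fun y => y < x)).card) • Finsupp.lsingle (s.erase x))

/-- The submodule of `n`-chains supported on simplices of `L` (of cardinality `n+1`). -/
def chainsIn (L : Finset (Finset V)) (n : ℕ) : Submodule 𝔽 (Finset V →₀ 𝔽) where
  carrier := {c | ∀ s ∈ c.support, s ∈ L ∧ s.card = n + 1}
  add_mem' := by
    intro c d hc hd s hs
    rcases Finset.mem_union.mp (Finsupp.support_add hs) with h | h
    · exact hc s h
    · exact hd s h
  zero_mem' := by intro s hs; simp at hs
  smul_mem' := by
    intro a c hc s hs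
    exact hc s (Finsupp.support_smul hs)

/-- `n`-cycles supported in `L`. -/
noncomputable def cyclesIn (L : Finset (Finset V)) (n : ℕ) : Submodule 𝔽 (Finset V →₀ 𝔽) :=
  chainsIn 𝔽 L n ⊓ LinearMap.ker (bdry 𝔽)

/-- `n`-boundaries of `(n+1)`-chains supported in `L`. -/
noncomputable def boundariesIn (L : Finset (Finset V)) (n : ℕ) : Submodule 𝔽 (Finset V →₀ 𝔽) :=
  (chainsIn 𝔽 L (n + 1)).map (bdry 𝔽)

/-- `α` is an `n`-cycle in the subcomplex `L`. -/
def IsCycleIn (L : Finset (Finset V)) (n : ℕ) (α : Finset V →₀ 𝔽) : Prop :=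
  α ∈ cyclesIn 𝔽 L n

/-- The class of `α` is trivial in `H_n(L)`. -/
def TrivialIn (L : Finset (Finset V)) (n : ℕ) (α : Finset V →₀ 𝔽) : Prop :=
  α ∈ boundariesIn 𝔽 L n

/-- `α` and `β` are homologous in `L`. -/
def HomologousIn (L : Finset (Finset V)) (n : ℕ) (α β : Finset V →₀ 𝔽) : Prop :=
  α - β ∈ boundariesIn 𝔽 L n

/-- The homology class `[α] ∈ H_n(K^f_a)` is born at `a`: it is a nontrivial cycle
at level `a` and does not come from any strictly earlier level. -/
def BornAt (K : SComplex V) (f : Finset V → ℝ) (n : ℕ) (α : Finset V →₀ 𝔽) (a : ℝ) : Prop :=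
  IsCycleIn 𝔽 (sublevel K f a) n α ∧ ¬ TrivialIn 𝔽 (sublevel K f a) n α ∧
  ∀ q < a, ¬ ∃ β, IsCycleIn 𝔽 (sublevel K f q) n β ∧ HomologousIn 𝔽 (sublevel K f a) n α β

/-- The class `[α]` terminates at level `b` in the filtration `K^f`. -/
def TerminatesAt (K : SComplex V) (f : Finset V → ℝ) (n : ℕ) (α : Finset V →₀ 𝔽) (b : ℝ) : Prop :=
  TrivialIn 𝔽 (sublevel K f b) n α ∧ ∀ q < b, ¬ TrivialIn 𝔽 (sublevel K f q) n α

/-- `Δ` is the terminal simplex of `[α]` in the filtration `K^f`: the simplex added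
at the level where `[α]` terminates. -/
def TerminalSimplex (K : SComplex V) (f : Finset V → ℝ) (n : ℕ) (α : Finset V →₀ 𝔽)
    (Δ : Finset V) : Prop :=
  Δ ∈ K.faces ∧ TerminatesAt 𝔽 K f n α (f Δ)

/-- `Σ_ε`: the set of terminal simplices of `[α]` over all injective filtration
functions within sup-distance `ε` of `f`. -/
def TermSet (K : SComplex V) (f : Finset V → ℝ) (n : ℕ) (α : Finset V →₀ 𝔽) (ε : ℝ) :
    Set (Finset V) :=
  {Δ | ∃ g, IsInjFiltration K g ∧ DistLE K f g ε ∧ TerminalSimplex 𝔽 K g n α Δ}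

/-- `τ` gives birth to a class in `H_n(K^f)`. -/
def IsBirthSimplex (K : SComplex V) (f : Finset V → ℝ) (n : ℕ) (τ : Finset V) : Prop :=
  τ ∈ K.faces ∧ ∃ β : Finset V →₀ 𝔽, BornAt 𝔽 K f n β (f τ)

/-- `τ` terminates a class in `H_n(K^f)`. -/
def IsTerminalSimplexOf (K : SComplex V) (f : Finset V → ℝ) (n : ℕ) (τ : Finset V) : Prop :=
  τ ∈ K.faces ∧ ∃ (β : Finset V →₀ 𝔽) (a : ℝ),
    BornAt 𝔽 K f n β a ∧ TerminatesAt 𝔽 K f n β (f τ)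

/-- The linear order on the faces of `K` induced by `g`. -/
def inducedRel (K : SComplex V) (g : Finset V → ℝ) :
    {s // s ∈ K.faces} → {s // s ∈ K.faces} → Prop :=
  fun s t => g s.1 < g t.1

/-- `Π_ε`: the set of orders on the faces of `K` induced by injective filtration
functions within sup-distance `ε` of `f`. -/
def OrderSet (K : SComplex V) (f : Finset V → ℝ) (ε : ℝ) :
    Set ({s // s ∈ K.faces} → {s // s ∈ K.faces} → Prop) :=
  {r | ∃ g, IsInjFiltration K g ∧ DistLE K f g ε ∧ r = inducedRel K g}

/-- `f` is generic: equal absolute differences of `f`-values occur only for the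
same unordered pair of faces. -/
def Generic (K : SComplex V) (f : Finset V → ℝ) : Prop :=
  ∀ s ∈ K.faces, ∀ t ∈ K.faces, ∀ s' ∈ K.faces, ∀ t' ∈ K.faces,
    s ≠ t → s' ≠ t' → |f s - f t| = |f s' - f t'| →
    (s = s' ∧ t = t') ∨ (s = t' ∧ t = s')

/-- The rank of the map `H_n(K^f_p) → H_n(K^f_q)`, realized as the dimension of
the image of the cycles at level `p` in the quotient by boundaries at level `q`. -/
noncomputable def persRank (K : SComplex V) (f : Finset V → ℝ) (n : ℕ) (p q : ℝ) : ℕ :=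
  Module.finrank 𝔽
    ↥(Submodule.map (boundariesIn 𝔽 (sublevel K f q) n).mkQ (cyclesIn 𝔽 (sublevel K f p) n))

/-- `[a, b)` is a bar of the `n`-th persistence module of `K^f`: the standard
inclusion–exclusion of ranks equals `1` for all sufficiently small offsets. -/
def IsBar (K : SComplex V) (f : Finset V → ℝ) (n : ℕ) (a b : ℝ) : Prop :=
  a < b ∧ ∃ δ > 0, ∀ ε : ℝ, 0 < ε → ε < δ →
    persRank 𝔽 K f n a (b - ε) + persRank 𝔽 K f n (a - ε) b
      = persRank 𝔽 K f n a b + persRank 𝔽 K f n (a - ε) (b - ε) + 1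

/-!
Let `m` be the midpoint of `f σ₁` and `f σ₂` and `δ > 0` the slack left by `f σ₂ < f σ₁ + 2ε`.
Raising every coface of `σ₁` to at least `m + δ` and lowering every other face of `σ₂` to at most
`m - δ` keeps the function monotone and moves no value by more than `ε - δ`; since `σ₁` and `σ₂`
have the same dimension, `σ₁` is not a face of `σ₂`, so the new function puts `σ₂` strictly below
`σ₁`. It need not be injective, but adding `t * f` for a small `t > 0` makes it so while keeping
every strict inequality and moving values by at most `δ`.
-/

open Filter Topology Set

section PushApart

variable {α β : Type*} [Preorder α] [LinearOrder β]

open Classical in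
noncomputable def pushApart (a b : α) (lo hi : β) (f : α → β) (x : α) : β :=
  if a ≤ x then max (f x) hi else if x ≤ b then min (f x) lo else f x

theorem MonotoneOn.pushApart {S : Set α} {f : α → β} (hf : MonotoneOn f S) (a b : α)
    {lo hi : β} (h : lo ≤ hi) : MonotoneOn (pushApart a b lo hi f) S := by
  intro x hx y hy hxy
  have hfxy := hf hx hy hxy
  have hay : a ≤ x → a ≤ y := (le_trans · hxy)
  have hxb : y ≤ b → x ≤ b := hxy.trans
  unfold _root_.pushApart
  split_ifs <;> grind

theorem pushApart_lt_pushApart {a b : α} (hab : ¬ a ≤ b) {lo hi : β} (h : lo < hi) (f : α → β) :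
    pushApart a b lo hi f b < pushApart a b lo hi f a := by
  simp only [pushApart, le_refl, if_true, if_neg hab]
  exact (min_le_right _ _).trans_lt (h.trans_le (le_max_right _ _))

theorem abs_sub_pushApart_le {S : Set α} {f : α → ℝ} (hf : MonotoneOn f S) {a b x : α}
    (ha : a ∈ S) (hb : b ∈ S) (hx : x ∈ S) {lo hi r : ℝ} (hr : 0 ≤ r)
    (hhi : hi ≤ f a + r) (hlo : f b - r ≤ lo) : |f x - pushApart a b lo hi f x| ≤ r := by
  unfold pushApart
  split_ifs with hax hxb
  · have := hf ha hx hax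
    rw [abs_sub_comm, abs_of_nonneg (sub_nonneg.2 (le_max_left _ _)), sub_le_iff_le_add]
    exact max_le (by linarith) (by linarith)
  · have := hf hx hb hxb
    rw [abs_of_nonneg (sub_nonneg.2 (min_le_left _ _)), sub_le_comm]
    exact le_min (by linarith) (by linarith)
  · simpa using hr

end PushApart

section Perturbation

variable {α : Type*}

theorem eventually_forall_lt_add_mul (S : Finset α) (f g : α → ℝ) :
    ∀ᶠ t in 𝓝 (0 : ℝ), ∀ x ∈ S, ∀ y ∈ S, g x < g y → g x + t * f x < g y + t * f y := by
  simp only [eventually_all_finset, eventually_imp_distrib_left]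
  intro x _ y _ hxy
  have hc : ∀ z, Tendsto (fun t : ℝ => g z + t * f z) (𝓝 0) (𝓝 (g z)) := fun z =>
    Continuous.tendsto' (by fun_prop) 0 _ (by simp)
  exact (hc x).eventually_lt (hc y) hxy

theorem eventually_forall_abs_mul_le (S : Finset α) (f : α → ℝ) {η : ℝ} (hη : 0 < η) :
    ∀ᶠ t in 𝓝 (0 : ℝ), ∀ x ∈ S, |t * f x| ≤ η := by
  rw [eventually_all_finset]
  intro x _
  have hc : Tendsto (fun t : ℝ => |t * f x|) (𝓝 0) (𝓝 0) :=
    Continuous.tendsto' (by fun_prop) 0 _ (by simp)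
  exact hc.eventually (eventually_le_nhds hη)

theorem Set.InjOn.add_mul_of_lt {S : Set α} {f g : α → ℝ} (hf : InjOn f S) {t : ℝ} (ht : t ≠ 0)
    (hlt : ∀ x ∈ S, ∀ y ∈ S, g x < g y → g x + t * f x < g y + t * f y) :
    InjOn (fun x => g x + t * f x) S := by
  intro x hx y hy hxy
  rcases lt_trichotomy (g x) (g y) with h | h | h
  · exact absurd hxy (hlt x hx y hy h).ne
  · exact hf hx hy (mul_left_cancel₀ ht (by linarith))
  · exact absurd hxy (hlt y hy x hx h).ne'

theorem MonotoneOn.exists_injOn_near [Preorder α] {S : Finset α} {f g : α → ℝ}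
    (hg : MonotoneOn g S) (hf : MonotoneOn f S) (hfinj : InjOn f S) {η : ℝ} (hη : 0 < η) :
    ∃ g' : α → ℝ, MonotoneOn g' S ∧ InjOn g' S ∧ (∀ x ∈ S, |g x - g' x| ≤ η) ∧
      ∀ x ∈ S, ∀ y ∈ S, g x < g y → g' x < g' y := by
  obtain ⟨t, ⟨hlt, habs⟩, ht⟩ :=
    (((eventually_forall_lt_add_mul S f g).and (eventually_forall_abs_mul_le S f hη)).filter_mono
      nhdsWithin_le_nhds |>.and self_mem_nhdsWithin).exists (f := 𝓝[>] (0 : ℝ))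
  refine ⟨fun x => g x + t * f x,
    hg.add fun x hx y hy hxy => mul_le_mul_of_nonneg_left (hf hx hy hxy) ht.le,
    hfinj.add_mul_of_lt ht.ne' hlt, fun x hx => ?_, hlt⟩
  simpa using habs x hx

end Perturbation

theorem isInjFiltration_iff {V : Type*} (K : SComplex V) (f : Finset V → ℝ) :
    IsInjFiltration K f ↔ MonotoneOn f K.faces ∧ InjOn f K.faces :=
  Iff.rfl

theorem stmt0_general {V : Type*} [LinearOrder V] (K : SComplex V) (f : Finset V → ℝ)
    (hf : IsInjFiltration K f) (n : ℕ) (σ₁ σ₂ : Finset V)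
    (h1 : σ₁ ∈ K.faces) (h2 : σ₂ ∈ K.faces) (hne : σ₁ ≠ σ₂)
    (hd1 : σ₁.card = n + 1) (hd2 : σ₂.card = n + 1)
    (ε : ℝ) (hlt : f σ₁ < f σ₂) (hlt2 : f σ₂ < f σ₁ + 2 * ε) :
    ∃ g : Finset V → ℝ, IsInjFiltration K g ∧ DistLE K f g ε ∧ g σ₂ < g σ₁ := by
  obtain ⟨hmono, hinj⟩ := (isInjFiltration_iff K f).1 hf
  set m := (f σ₁ + f σ₂) / 2 with hm
  set δ := (2 * ε - (f σ₂ - f σ₁)) / 4 with hδdef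
  have hδ : 0 < δ := by linarith
  set g₀ := pushApart σ₁ σ₂ (m - δ) (m + δ) f
  have hnsub : ¬ σ₁ ≤ σ₂ := fun h => hne (Finset.eq_of_subset_of_card_le h (by omega))
  have hg₀ : ∀ s ∈ K.faces, |f s - g₀ s| ≤ ε - δ := fun s hs =>
    abs_sub_pushApart_le hmono h1 h2 hs (by linarith) (by linarith) (by linarith)
  obtain ⟨g, hgmono, hginj, hgg₀, hgstrict⟩ :=
    (hmono.pushApart σ₁ σ₂ (by linarith : m - δ ≤ m + δ)).exists_injOn_near hmono hinj hδ
  refine ⟨g, (isInjFiltration_iff K g).2 ⟨hgmono, hginj⟩, fun s hs => ?_,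
    hgstrict σ₂ h2 σ₁ h1 (pushApart_lt_pushApart hnsub (by linarith) f)⟩
  calc |f s - g s| ≤ |f s - g₀ s| + |g₀ s - g s| := abs_sub_le _ _ _
    _ ≤ (ε - δ) + δ := add_le_add (hg₀ s hs) (hgg₀ s hs)
    _ = ε := by ring

/-- Proposition `switch`: swapping two `n`-simplices whose
`f`-values are within `2ε` by an `ε`-perturbation. -/
theorem stmt0 {V : Type*} [LinearOrder V] (K : SComplex V) (f : Finset V → ℝ)
    (hf : IsInjFiltration K f) (n : ℕ) (σ₁ σ₂ : Finset V)
    (h1 : σ₁ ∈ K.faces) (h2 : σ₂ ∈ K.faces) (hne : σ₁ ≠ σ₂)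
    (hd1 : σ₁.card = n + 1) (hd2 : σ₂.card = n + 1)
    (ε : ℝ) (hε : 0 < ε) (hlt : f σ₁ < f σ₂) (hlt2 : f σ₂ < f σ₁ + 2 * ε) :
    ∃ g : Finset V → ℝ, IsInjFiltration K g ∧ DistLE K f g ε ∧ g σ₂ < g σ₁ :=
  stmt0_general K f hf n σ₁ σ₂ h1 h2 hne hd1 hd2 ε hlt hlt2
end

section
/- Let K be a finite simplicial complex with an injective filtration function f, and for each ε > 0 let Π_ε denote the set of linear orders on the simplices of K induced by injective filtration functions g with ‖f − g‖_∞ ≤ ε. Then for every t > 0 there exists δ > 0 such that Π_ε = Π_t for all ε ∈ (t − δ, t]; in particular, the function ε ↦ Π_ε is left-continuous (constant on some half-open interval ending at each t). -/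
open scoped BigOperators

variable {V : Type*} [LinearOrder V]

variable (𝔽 : Type*) [Field 𝔽]

/-!
Moving a realising function `g` a fraction `c` of the way towards `f` shrinks its distance to `f`
by the factor `1 - c`, and for small `c` it does not change the strict order of `g` on the finitely
many faces of `K`. So every order in `Π_t` already lies in some `Π_ε` with `ε < t`; as `Π_t` is
finite and `ε ↦ Π_ε` is monotone, a single `ε < t` serves all of them.
-/

open Filter Topology

theorem eventually_forall_lt_add_mul_s3 {ι : Type*} (S : Finset ι) (g h : ι → ℝ) :
    ∀ᶠ c in 𝓝 (0 : ℝ), ∀ s ∈ S, ∀ u ∈ S, g s < g u → g s + c * h s < g u + c * h u := by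
  simp only [eventually_all_finset, eventually_imp_distrib_left]
  intro s _ u _ hlt
  exact ContinuousAt.eventually_lt (by fun_prop) (by fun_prop) (by simpa using hlt)

theorem Set.Finite.exists_lt_subset_of_monotone {α : Type*} {S : ℝ → Set α} (hS : Monotone S)
    {t : ℝ} (hfin : (S t).Finite) (h : ∀ r ∈ S t, ∃ ε < t, r ∈ S ε) :
    ∃ ε < t, S t ⊆ S ε := by
  have hev : ∀ᶠ ε in 𝓝[<] t, ∀ r ∈ S t, r ∈ S ε := by
    refine hfin.eventually_all.2 fun r hr => ?_
    obtain ⟨ε, hεt, hrε⟩ := h r hr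
    filter_upwards [Ioo_mem_nhdsLT hεt] with ε' hε'
    exact hS hε'.1.le hrε
  obtain ⟨ε, hsub, hεt⟩ := (hev.and self_mem_nhdsWithin).exists
  exact ⟨ε, hεt, hsub⟩

section

variable {V : Type*} {K : SComplex V}

theorem lt_iff_lt_of_lt_imp_lt {g g' : Finset V → ℝ} (hg : IsInjFiltration K g)
    (hlt : ∀ s ∈ K.faces, ∀ u ∈ K.faces, g s < g u → g' s < g' u) :
    ∀ s ∈ K.faces, ∀ u ∈ K.faces, g' s < g' u ↔ g s < g u := by
  refine fun s hs u hu => ⟨fun h' => ?_, hlt s hs u hu⟩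
  rcases lt_trichotomy (g s) (g u) with h | h | h
  · exact h
  · obtain rfl := hg.2 s hs u hu h
    exact absurd h' (lt_irrefl _)
  · exact absurd (hlt u hu s hs h) h'.asymm

theorem IsInjFiltration.of_lt_imp_lt {g g' : Finset V → ℝ} (hg : IsInjFiltration K g)
    (hlt : ∀ s ∈ K.faces, ∀ u ∈ K.faces, g s < g u → g' s < g' u) :
    IsInjFiltration K g' := by
  have hiff := lt_iff_lt_of_lt_imp_lt hg hlt
  refine ⟨fun s hs u hu hsu => ?_, fun s hs u hu heq => ?_⟩
  · rcases eq_or_ne s u with rfl | hne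
    · exact le_rfl
    · exact (hlt s hs u hu <| (hg.1 s hs u hu hsu).lt_of_ne fun h => hne (hg.2 s hs u hu h)).le
  · refine hg.2 s hs u hu (le_antisymm ?_ ?_)
    · exact not_lt.1 (mt (hiff u hu s hs).2 (not_lt.2 heq.le))
    · exact not_lt.1 (mt (hiff s hs u hu).2 (not_lt.2 heq.ge))

theorem inducedRel_eq_of_lt_imp_lt {g g' : Finset V → ℝ} (hg : IsInjFiltration K g)
    (hlt : ∀ s ∈ K.faces, ∀ u ∈ K.faces, g s < g u → g' s < g' u) :
    inducedRel K g' = inducedRel K g := by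
  funext s u
  exact propext (lt_iff_lt_of_lt_imp_lt hg hlt s.1 s.2 u.1 u.2)

theorem orderSet_mono (f : Finset V → ℝ) : Monotone (OrderSet K f) := by
  rintro ε ε' hεε' r ⟨g, hg, hgd, rfl⟩
  exact ⟨g, hg, fun s hs => (hgd s hs).trans hεε', rfl⟩

theorem exists_lt_mem_orderSet {f : Finset V → ℝ} {t : ℝ} (ht : 0 < t) {r}
    (hr : r ∈ OrderSet K f t) : ∃ ε < t, r ∈ OrderSet K f ε := by
  obtain ⟨g, hg, hgd, rfl⟩ := hr
  obtain ⟨c, hlt, hc0, hc1⟩ := ((eventually_forall_lt_add_mul_s3 K.faces g (f - g)).filter_mono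
    nhdsWithin_le_nhds |>.and (Ioo_mem_nhdsGT one_pos)).exists
  refine ⟨(1 - c) * t, by nlinarith, fun s => g s + c * (f s - g s),
    hg.of_lt_imp_lt hlt, fun s hs => ?_, (inducedRel_eq_of_lt_imp_lt hg hlt).symm⟩
  calc |f s - (g s + c * (f s - g s))| = (1 - c) * |f s - g s| := by
        rw [show f s - (g s + c * (f s - g s)) = (1 - c) * (f s - g s) by ring, abs_mul,
          abs_of_pos (sub_pos.2 hc1)]
    _ ≤ (1 - c) * t := mul_le_mul_of_nonneg_left (hgd s hs) (by linarith)

end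

theorem stmt3_general {V : Type*} (K : SComplex V) (f : Finset V → ℝ) :
    ∀ t : ℝ, 0 < t → ∃ δ > 0, ∀ ε : ℝ, t - δ < ε → ε ≤ t →
      OrderSet K f ε = OrderSet K f t := by
  intro t ht
  obtain ⟨ε₀, hε₀t, hsub⟩ := (Set.toFinite (OrderSet K f t)).exists_lt_subset_of_monotone
    (orderSet_mono f) fun r hr => exists_lt_mem_orderSet ht hr
  refine ⟨t - ε₀, by linarith, fun ε hε hεt => ?_⟩
  exact (orderSet_mono f hεt).antisymm (hsub.trans (orderSet_mono f (by linarith)))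

/-- Lemma `LemmaUSC` for `Π_ε`: `ε ↦ Π_ε` is left-continuous:
constant on a half-open interval `(t - δ, t]` at each `t > 0`. -/
theorem stmt3 {V : Type*} [LinearOrder V] (K : SComplex V) (f : Finset V → ℝ)
    (hf : IsInjFiltration K f) :
    ∀ t : ℝ, 0 < t → ∃ δ > 0, ∀ ε : ℝ, t - δ < ε → ε ≤ t →
      OrderSet K f ε = OrderSet K f t :=
  stmt3_general K f
end

section
/- For every integer n ≥ 1 there exists a finite simplicial complex K (a cycle graph on n+2 vertices), an injective filtration function f on K, a 0-dimensional homology class [α] born at a and terminating at b, and a threshold t₀ ∈ (0, (b−a)/2) such that |Σ_ε| = 1 for all ε ≤ t₀ while |Σ_ε| ≥ n + 2 for all ε > t₀ sufficiently close to t₀; in particular, the function ε ↦ |Σ_ε| can jump from 1 to n + 2. -/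
open scoped BigOperators

variable {V : Type*} [LinearOrder V]

variable (𝔽 : Type*) [Field 𝔽]

/-!
Write `N = n + 1`. The class of `[v_{n+1}] - [v_0]` dies exactly when one of the two arcs
joining its endpoints is complete: the closing edge `{0, n + 1}`, or all the path edges
`{i, i + 1}`. Let the vertex `v` enter at `v`, the closing edge at `4N` and the path edges
in `(5N, 6N]`. A perturbation of size `ε ≤ N` cannot push the closing edge past the
last path edge at `6N`, so the closing edge stays the only terminal simplex. For `ε > N` one
can put one path edge at `5N`, lower all the others by `ε` below it, and raise the closing edge
to `4N + ε > 5N`; the chosen path edge then kills the class, and it can be any of the `n + 1`.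
-/

section Chains

variable {𝔽} {L : Finset (Finset V)} {n : ℕ}

theorem bdry_single (s : Finset V) (c : 𝔽) :
    bdry 𝔽 (Finsupp.single s c) =
      ∑ x ∈ s, (-1 : 𝔽) ^ (s.filter (· < x)).card • Finsupp.single (s.erase x) c := by
  rw [bdry, Finsupp.lsum_single, LinearMap.sum_apply]
  exact Finset.sum_congr rfl fun _ _ => rfl

theorem bdry_single_singleton (v : V) (c : 𝔽) :
    bdry 𝔽 (Finsupp.single {v} c) = Finsupp.single ∅ c := by
  rw [bdry_single, Finset.sum_singleton, Finset.filter_singleton, if_neg (lt_irrefl v),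
    Finset.card_empty, pow_zero, one_smul, Finset.erase_singleton]

theorem bdry_single_pair {a b : V} (hab : a < b) (c : 𝔽) :
    bdry 𝔽 (Finsupp.single {a, b} c) = Finsupp.single {b} c - Finsupp.single {a} c := by
  rw [bdry_single, Finset.sum_pair hab.ne, Finset.filter_insert, Finset.filter_insert,
    Finset.filter_singleton, Finset.filter_singleton, if_neg (lt_irrefl a), if_neg hab.not_gt,
    if_pos hab, if_neg (lt_irrefl b), Finset.erase_insert (by simp [hab.ne]),
    Finset.erase_insert_of_ne hab.ne, Finset.erase_singleton]
  simp [sub_eq_add_neg]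

theorem single_mem_chainsIn {s : Finset V} (hs : s ∈ L) (hcard : s.card = n + 1) (c : 𝔽) :
    Finsupp.single s c ∈ chainsIn 𝔽 L n := by
  intro t ht
  rw [Finset.mem_singleton.mp (Finsupp.support_single_subset ht)]
  exact ⟨hs, hcard⟩

theorem boundariesIn_eq_bot (h : ∀ s ∈ L, s.card ≠ n + 2) : boundariesIn 𝔽 L n = ⊥ := by
  have hchains : chainsIn 𝔽 L (n + 1) = ⊥ := by
    refine eq_bot_iff.mpr fun c hc => ?_
    rw [Submodule.mem_bot, ← Finsupp.support_eq_empty, Finset.eq_empty_iff_forall_notMem]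
    exact fun s hs => h s (hc s hs).1 (hc s hs).2
  rw [boundariesIn, hchains, Submodule.map_bot]

theorem map_eq_zero_of_mem_boundariesIn (φ : (Finset V →₀ 𝔽) →ₗ[𝔽] 𝔽)
    (hφ : ∀ s ∈ L, s.card = n + 2 → φ (bdry 𝔽 (Finsupp.single s 1)) = 0)
    {c : Finset V →₀ 𝔽} (hc : c ∈ boundariesIn 𝔽 L n) : φ c = 0 := by
  obtain ⟨d, hd, rfl⟩ := hc
  rw [← d.sum_single, map_finsuppSum, map_finsuppSum]
  refine Finset.sum_eq_zero fun s hs => ?_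
  change φ (bdry 𝔽 (Finsupp.single s (d s))) = 0
  rw [← mul_one (d s), ← smul_eq_mul, ← Finsupp.smul_single, map_smul, map_smul,
    hφ s (hd s hs).1 (hd s hs).2, smul_zero]

end Chains

section Persistence

variable {𝔽} {K : SComplex V} {f : Finset V → ℝ} {n : ℕ} {α : Finset V →₀ 𝔽}

theorem bornAt_of_boundariesIn_eq_bot {a : ℝ} (hα : IsCycleIn 𝔽 (sublevel K f a) n α)
    (hα0 : α ≠ 0) (hB : boundariesIn 𝔽 (sublevel K f a) n = ⊥)
    (hlate : ∀ q < a, α ∉ chainsIn 𝔽 (sublevel K f q) n) : BornAt 𝔽 K f n α a := by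
  refine ⟨hα, fun h => hα0 (by rwa [TrivialIn, hB, Submodule.mem_bot] at h), ?_⟩
  rintro q hq ⟨β, hβ, hαβ⟩
  rw [HomologousIn, hB, Submodule.mem_bot, sub_eq_zero] at hαβ
  exact hlate q hq (hαβ ▸ hβ.1)

theorem terminatesAt_of_forall_trivialIn_iff {b : ℝ}
    (h : ∀ r, TrivialIn 𝔽 (sublevel K f r) n α ↔ b ≤ r) : TerminatesAt 𝔽 K f n α b :=
  ⟨(h b).mpr le_rfl, fun _ hq hq' => hq.not_ge ((h _).mp hq')⟩

theorem TerminatesAt.unique {b b' : ℝ} (h : TerminatesAt 𝔽 K f n α b)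
    (h' : TerminatesAt 𝔽 K f n α b') : b = b' :=
  le_antisymm (not_lt.mp fun hlt => h.2 _ hlt h'.1) (not_lt.mp fun hlt => h'.2 _ hlt h.1)

theorem TerminalSimplex.unique (hf : IsInjFiltration K f) {Δ Δ' : Finset V}
    (h : TerminalSimplex 𝔽 K f n α Δ) (h' : TerminalSimplex 𝔽 K f n α Δ') : Δ = Δ' :=
  hf.2 _ h.1 _ h'.1 (h.2.unique h'.2)

theorem termSet_finite (ε : ℝ) : (TermSet 𝔽 K f n α ε).Finite :=
  K.faces.finite_toSet.subset fun _ ⟨_, _, _, hΔ⟩ => hΔ.1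

end Persistence

theorem Fin.sum_univ_succ_sub_castSucc {M : Type*} [AddCommGroup M] {n : ℕ}
    (g : Fin (n + 1) → M) : ∑ i : Fin n, (g i.succ - g i.castSucc) = g (Fin.last n) - g 0 := by
  induction n with
  | zero => simp
  | succ n ih =>
    rw [Fin.sum_univ_castSucc]
    simp only [Fin.succ_castSucc]
    rw [ih (fun i => g i.castSucc), Fin.succ_last, Fin.castSucc_zero]
    abel

namespace CycleGraph

variable {𝔽} {n : ℕ}

def pathEdge (i : Fin (n + 1)) : Finset (Fin (n + 2)) := {i.castSucc, i.succ}

def closingEdge (n : ℕ) : Finset (Fin (n + 2)) := {0, Fin.last (n + 1)}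

theorem card_pathEdge (i : Fin (n + 1)) : (pathEdge i).card = 2 :=
  Finset.card_pair Fin.castSucc_lt_succ.ne

theorem card_closingEdge : (closingEdge n).card = 2 :=
  Finset.card_pair Fin.last_pos.ne

theorem pathEdge_injective : Function.Injective (pathEdge (n := n)) := by
  intro i j h
  have hi : i.castSucc ∈ pathEdge j := h ▸ Finset.mem_insert_self _ _
  have hj : j.castSucc ∈ pathEdge i := h ▸ Finset.mem_insert_self _ _
  simp only [pathEdge, Finset.mem_insert, Finset.mem_singleton, Fin.ext_iff, Fin.val_castSucc,
    Fin.val_succ] at hi hj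
  exact Fin.ext (by omega)

theorem closingEdge_ne_pathEdge (hn : 1 ≤ n) (i : Fin (n + 1)) :
    closingEdge n ≠ pathEdge i := by
  intro h
  have h0 : (0 : Fin (n + 2)) ∈ pathEdge i := h ▸ Finset.mem_insert_self _ _
  have hl : Fin.last (n + 1) ∈ pathEdge i := h ▸ by simp [closingEdge]
  simp only [pathEdge, Finset.mem_insert, Finset.mem_singleton, Fin.ext_iff, Fin.val_castSucc,
    Fin.val_succ, Fin.val_zero, Fin.val_last] at h0 hl
  omega

/-- Addition wraps around in `Fin (n + 2)`, so `i = Fin.last (n + 1)` gives the closing edge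
`{n + 1, 0}`. -/
def cycleComplex (n : ℕ) : SComplex (Fin (n + 2)) where
  faces := (Finset.univ.image fun i : Fin (n + 2) => ({i} : Finset (Fin (n + 2)))) ∪
    (Finset.univ.image fun i : Fin (n + 2) => ({i, i + 1} : Finset (Fin (n + 2))))
  nonempty_of_mem s hs := by
    rcases Finset.mem_union.mp hs with h | h <;>
    · obtain ⟨i, -, rfl⟩ := Finset.mem_image.mp h
      exact ⟨i, by simp⟩
  down_closed s hs t hts ht := by
    have hcard : s.card ≤ 2 := by
      rcases Finset.mem_union.mp hs with h | h <;> obtain ⟨i, -, rfl⟩ := Finset.mem_image.mp h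
      · simp
      · exact Finset.card_insert_le _ _ |>.trans (by simp)
    rcases (Finset.card_le_card hts).lt_or_eq with hlt | heq
    · obtain ⟨v, rfl⟩ := (Finset.card_eq_one (s := t)).mp (by have := ht.card_pos; omega)
      exact Finset.mem_union_left _ (Finset.mem_image_of_mem _ (Finset.mem_univ v))
    · rwa [Finset.eq_of_subset_of_card_le hts heq.ge]

theorem mem_cycleComplex_faces {s : Finset (Fin (n + 2))} :
    s ∈ (cycleComplex n).faces ↔
      (∃ v, s = {v}) ∨ (∃ i, s = pathEdge i) ∨ s = closingEdge n := by
  simp only [cycleComplex, Finset.mem_union, Finset.mem_image, Finset.mem_univ, true_and,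
    Fin.exists_fin_succ' (P := fun i : Fin (n + 2) => ({i, i + 1} : Finset _) = s),
    Fin.coeSucc_eq_succ, Fin.last_add_one, pathEdge, closingEdge, Finset.pair_comm _ (0 : Fin _)]
  simp only [eq_comm]

theorem singleton_mem_faces (v : Fin (n + 2)) : {v} ∈ (cycleComplex n).faces :=
  mem_cycleComplex_faces.mpr (Or.inl ⟨v, rfl⟩)

theorem pathEdge_mem_faces (i : Fin (n + 1)) : pathEdge i ∈ (cycleComplex n).faces :=
  mem_cycleComplex_faces.mpr (Or.inr (Or.inl ⟨i, rfl⟩))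

theorem closingEdge_mem_faces : closingEdge n ∈ (cycleComplex n).faces :=
  mem_cycleComplex_faces.mpr (Or.inr (Or.inr rfl))

variable (𝔽 n) in
noncomputable def endpointCycle : Finset (Fin (n + 2)) →₀ 𝔽 :=
  Finsupp.single {Fin.last (n + 1)} 1 - Finsupp.single {0} 1

theorem endpointCycle_apply_last : endpointCycle 𝔽 n {Fin.last (n + 1)} = 1 := by
  simp [endpointCycle]

theorem endpointCycle_ne_zero : endpointCycle 𝔽 n ≠ 0 := fun h => by
  simpa [h] using endpointCycle_apply_last (𝔽 := 𝔽) (n := n)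

theorem bdry_endpointCycle : bdry 𝔽 (endpointCycle 𝔽 n) = 0 := by
  rw [endpointCycle, map_sub, bdry_single_singleton, bdry_single_singleton, sub_self]

theorem bdry_single_pathEdge (i : Fin (n + 1)) (c : 𝔽) :
    bdry 𝔽 (Finsupp.single (pathEdge i) c) =
      Finsupp.single {i.succ} c - Finsupp.single {i.castSucc} c :=
  bdry_single_pair Fin.castSucc_lt_succ c

theorem bdry_single_closingEdge :
    bdry 𝔽 (Finsupp.single (closingEdge n) 1) = endpointCycle 𝔽 n :=
  bdry_single_pair Fin.last_pos 1

theorem bdry_sum_pathEdge :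
    bdry 𝔽 (∑ i, Finsupp.single (pathEdge i) 1) = endpointCycle 𝔽 n := by
  simp only [map_sum, bdry_single_pathEdge]
  exact Fin.sum_univ_succ_sub_castSucc fun v : Fin (n + 2) =>
    Finsupp.single ({v} : Finset (Fin (n + 2))) (1 : 𝔽)

variable (𝔽) in
/-- Separates `endpointCycle` from the boundaries of all edges other than `pathEdge j` and
`closingEdge n`. -/
noncomputable def cutFunctional (j : Fin (n + 1)) :
    (Finset (Fin (n + 2)) →₀ 𝔽) →ₗ[𝔽] 𝔽 :=
  ∑ v ∈ Finset.univ.filter (j.castSucc < ·), Finsupp.lapply {v}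

theorem cutFunctional_single_singleton (j : Fin (n + 1)) (v : Fin (n + 2)) (c : 𝔽) :
    cutFunctional 𝔽 j (Finsupp.single {v} c) = if j.castSucc < v then c else 0 := by
  simp [cutFunctional, LinearMap.sum_apply, Finsupp.single_apply]

theorem cutFunctional_bdry_pathEdge {i j : Fin (n + 1)} (hij : i ≠ j) :
    cutFunctional 𝔽 j (bdry 𝔽 (Finsupp.single (pathEdge i) 1)) = 0 := by
  simp only [bdry_single_pathEdge, map_sub, cutFunctional_single_singleton,
    Fin.castSucc_lt_succ_iff, Fin.castSucc_lt_castSucc_iff]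
  rcases hij.lt_or_gt with h | h
  · simp [h.not_ge, h.not_gt]
  · simp [h.le, h]

theorem cutFunctional_endpointCycle (j : Fin (n + 1)) :
    cutFunctional 𝔽 j (endpointCycle 𝔽 n) = 1 := by
  simp [endpointCycle, cutFunctional_single_singleton, Fin.castSucc_lt_last]

theorem trivialIn_endpointCycle_iff {L : Finset (Finset (Fin (n + 2)))}
    (hL : L ⊆ (cycleComplex n).faces) :
    TrivialIn 𝔽 L 0 (endpointCycle 𝔽 n) ↔
      closingEdge n ∈ L ∨ ∀ i, pathEdge i ∈ L := by
  refine ⟨fun htriv => ?_, ?_⟩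
  · by_contra! ⟨hclose, j, hj⟩
    refine one_ne_zero (cutFunctional_endpointCycle (𝔽 := 𝔽) j ▸
      map_eq_zero_of_mem_boundariesIn _ (fun s hs hcard => ?_) htriv)
    rcases mem_cycleComplex_faces.mp (hL hs) with ⟨v, rfl⟩ | ⟨i, rfl⟩ | rfl
    · simp at hcard
    · exact cutFunctional_bdry_pathEdge (by rintro rfl; exact hj hs)
    · exact absurd hs hclose
  · rintro (hclose | hpath)
    · exact ⟨_, single_mem_chainsIn hclose card_closingEdge 1, bdry_single_closingEdge⟩
    · exact ⟨_, Submodule.sum_mem _ fun i _ => single_mem_chainsIn (hpath i) (card_pathEdge i) 1,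
        bdry_sum_pathEdge⟩

theorem trivialIn_sublevel_iff (g : Finset (Fin (n + 2)) → ℝ) (r : ℝ) :
    TrivialIn 𝔽 (sublevel (cycleComplex n) g r) 0 (endpointCycle 𝔽 n) ↔
      g (closingEdge n) ≤ r ∨ ∀ i, g (pathEdge i) ≤ r := by
  rw [trivialIn_endpointCycle_iff (L := sublevel _ g r) (Finset.filter_subset _ _)]
  simp only [sublevel, Finset.mem_filter, closingEdge_mem_faces, pathEdge_mem_faces, true_and]

theorem terminatesAt_closingEdge {g : Finset (Fin (n + 2)) → ℝ}
    (h : g (closingEdge n) ≤ g (pathEdge (Fin.last n))) :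
    TerminatesAt 𝔽 (cycleComplex n) g 0 (endpointCycle 𝔽 n) (g (closingEdge n)) :=
  terminatesAt_of_forall_trivialIn_iff fun r => by
    rw [trivialIn_sublevel_iff]
    exact ⟨fun h' => h'.elim id fun hpath => h.trans (hpath _), Or.inl⟩

theorem terminatesAt_pathEdge {g : Finset (Fin (n + 2)) → ℝ} {i : Fin (n + 1)}
    (hmax : ∀ j, g (pathEdge j) ≤ g (pathEdge i))
    (hclose : g (pathEdge i) ≤ g (closingEdge n)) :
    TerminatesAt 𝔽 (cycleComplex n) g 0 (endpointCycle 𝔽 n) (g (pathEdge i)) :=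
  terminatesAt_of_forall_trivialIn_iff fun r => by
    rw [trivialIn_sublevel_iff]
    exact ⟨fun h' => h'.elim hclose.trans (· i), fun h' => Or.inr fun j => (hmax j).trans h'⟩

open Classical in
noncomputable def faceFun (vert : Fin (n + 2) → ℝ) (path : Fin (n + 1) → ℝ) (close : ℝ)
    (s : Finset (Fin (n + 2))) : ℝ :=
  if h : ∃ v, s = {v} then vert h.choose
  else if h : ∃ i, s = pathEdge i then path h.choose else close

section FaceFun

variable {vert : Fin (n + 2) → ℝ} {path : Fin (n + 1) → ℝ} {close : ℝ}

theorem faceFun_singleton (v : Fin (n + 2)) : faceFun vert path close {v} = vert v := by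
  have h : ∃ w, ({v} : Finset (Fin (n + 2))) = {w} := ⟨v, rfl⟩
  rw [faceFun, dif_pos h, ← Finset.singleton_injective h.choose_spec]

theorem faceFun_pathEdge (i : Fin (n + 1)) : faceFun vert path close (pathEdge i) = path i := by
  have h : ∃ j, pathEdge i = pathEdge j := ⟨i, rfl⟩
  rw [faceFun, dif_neg fun ⟨v, hv⟩ => by simpa [hv] using card_pathEdge i, dif_pos h,
    ← pathEdge_injective h.choose_spec]

theorem faceFun_closingEdge (hn : 1 ≤ n) : faceFun vert path close (closingEdge n) = close := by
  rw [faceFun, dif_neg fun ⟨v, hv⟩ => by simpa [hv] using card_closingEdge (n := n),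
    dif_neg fun ⟨i, hi⟩ => closingEdge_ne_pathEdge hn i hi]

theorem isInjFiltration_faceFun (hn : 1 ≤ n) (hvert : Function.Injective vert)
    (hpath : Function.Injective path) (hclose : ∀ i, path i ≠ close)
    (hvp : ∀ v i, vert v < path i) (hvc : ∀ v, vert v < close) :
    IsInjFiltration (cycleComplex n) (faceFun vert path close) := by
  refine ⟨fun s hs t ht hst => ?_, fun s hs t ht hst => ?_⟩
  · rcases hst.eq_or_ssubset with rfl | hlt
    · exact le_rfl
    have hcard := Finset.card_lt_card hlt
    rcases mem_cycleComplex_faces.mp hs with ⟨v, rfl⟩ | ⟨i, rfl⟩ | rfl <;>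
      rcases mem_cycleComplex_faces.mp ht with ⟨w, rfl⟩ | ⟨j, rfl⟩ | rfl <;>
      simp only [faceFun_singleton, faceFun_pathEdge, faceFun_closingEdge hn, card_pathEdge,
        card_closingEdge, Finset.card_singleton] at hcard ⊢ <;>
      first | omega | exact (hvp _ _).le | exact (hvc _).le
  · rcases mem_cycleComplex_faces.mp hs with ⟨v, rfl⟩ | ⟨i, rfl⟩ | rfl <;>
      rcases mem_cycleComplex_faces.mp ht with ⟨w, rfl⟩ | ⟨j, rfl⟩ | rfl <;>
      simp only [faceFun_singleton, faceFun_pathEdge, faceFun_closingEdge hn] at hst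
    · rw [hvert hst]
    · exact absurd hst (hvp v j).ne
    · exact absurd hst (hvc v).ne
    · exact absurd hst (hvp w i).ne'
    · rw [hpath hst]
    · exact absurd hst (hclose i)
    · exact absurd hst (hvc w).ne'
    · exact absurd hst.symm (hclose j)
    · rfl

theorem distLE_faceFun (hn : 1 ≤ n) {vert' : Fin (n + 2) → ℝ} {path' : Fin (n + 1) → ℝ}
    {close' ε : ℝ} (hvert : ∀ v, |vert v - vert' v| ≤ ε)
    (hpath : ∀ i, |path i - path' i| ≤ ε)
    (hclose : |close - close'| ≤ ε) :
    DistLE (cycleComplex n) (faceFun vert path close) (faceFun vert' path' close') ε := by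
  intro s hs
  rcases mem_cycleComplex_faces.mp hs with ⟨v, rfl⟩ | ⟨i, rfl⟩ | rfl
  · simpa only [faceFun_singleton] using hvert v
  · simpa only [faceFun_pathEdge] using hpath i
  · simpa only [faceFun_closingEdge hn] using hclose

end FaceFun

noncomputable def exampleFun (n : ℕ) : Finset (Fin (n + 2)) → ℝ :=
  faceFun (fun v => (v : ℕ)) (fun i => 5 * (n + 1) + 1 + (i : ℕ)) (4 * (n + 1))

theorem exampleFun_singleton (v : Fin (n + 2)) : exampleFun n {v} = (v : ℕ) :=
  faceFun_singleton v

theorem exampleFun_pathEdge (i : Fin (n + 1)) :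
    exampleFun n (pathEdge i) = 5 * (n + 1) + 1 + (i : ℕ) :=
  faceFun_pathEdge i

theorem exampleFun_closingEdge (hn : 1 ≤ n) : exampleFun n (closingEdge n) = 4 * (n + 1) :=
  faceFun_closingEdge hn

theorem cast_val_le (v : Fin (n + 2)) : ((v : ℕ) : ℝ) ≤ n + 1 := by
  exact_mod_cast v.is_le

theorem isInjFiltration_exampleFun (hn : 1 ≤ n) :
    IsInjFiltration (cycleComplex n) (exampleFun n) := by
  have hpos : ∀ i : Fin (n + 1), (0 : ℝ) ≤ (i : ℕ) := fun _ => Nat.cast_nonneg _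
  refine isInjFiltration_faceFun hn (fun v w h => Fin.ext (by exact_mod_cast h))
    (fun i j h => Fin.ext (by exact_mod_cast add_left_cancel h)) (fun i => ?_)
    (fun v i => ?_) (fun v => ?_)
  · exact (by linarith [hpos i] : 4 * ((n : ℝ) + 1) < _).ne'
  · linarith [hpos i, cast_val_le v]
  · linarith [cast_val_le v]

theorem bornAt_exampleFun (hn : 1 ≤ n) :
    BornAt 𝔽 (cycleComplex n) (exampleFun n) 0 (endpointCycle 𝔽 n) (n + 1) := by
  have hvert : ∀ v, {v} ∈ sublevel (cycleComplex n) (exampleFun n) (n + 1) := fun v =>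
    Finset.mem_filter.mpr
      ⟨singleton_mem_faces v, (exampleFun_singleton v).trans_le (cast_val_le v)⟩
  refine bornAt_of_boundariesIn_eq_bot ⟨sub_mem ?_ ?_, bdry_endpointCycle⟩ endpointCycle_ne_zero
    (boundariesIn_eq_bot fun s hs => ?_) fun q hq hα => ?_
  · exact single_mem_chainsIn (hvert _) (Finset.card_singleton _) 1
  · exact single_mem_chainsIn (hvert _) (Finset.card_singleton _) 1
  · obtain ⟨hs, hle⟩ := Finset.mem_filter.mp hs
    rcases mem_cycleComplex_faces.mp hs with ⟨v, rfl⟩ | ⟨i, rfl⟩ | rfl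
    · simp
    · rw [exampleFun_pathEdge] at hle
      linarith [(Nat.cast_nonneg _ : (0 : ℝ) ≤ (i : ℕ))]
    · rw [exampleFun_closingEdge hn] at hle
      linarith
  · have hlast := (hα {Fin.last (n + 1)} (by simp [endpointCycle_apply_last])).1
    have hle := (Finset.mem_filter.mp hlast).2
    rw [exampleFun_singleton, Fin.val_last] at hle
    push_cast at hle
    linarith

theorem terminatesAt_exampleFun (hn : 1 ≤ n) :
    TerminatesAt 𝔽 (cycleComplex n) (exampleFun n) 0 (endpointCycle 𝔽 n) (4 * (n + 1)) := by
  rw [← exampleFun_closingEdge hn]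
  refine terminatesAt_closingEdge ?_
  rw [exampleFun_closingEdge hn, exampleFun_pathEdge]
  linarith [(Nat.cast_nonneg _ : (0 : ℝ) ≤ (Fin.last n : ℕ))]

theorem closingEdge_mem_termSet (hn : 1 ≤ n) {ε : ℝ} (hε : 0 ≤ ε) :
    closingEdge n ∈ TermSet 𝔽 (cycleComplex n) (exampleFun n) 0 (endpointCycle 𝔽 n) ε :=
  ⟨exampleFun n, isInjFiltration_exampleFun hn, fun _ _ => by simpa using hε,
    closingEdge_mem_faces, by rw [exampleFun_closingEdge hn]; exact terminatesAt_exampleFun hn⟩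

theorem eq_closingEdge_of_mem_termSet (hn : 1 ≤ n) {ε : ℝ} (hε : ε ≤ n + 1)
    {Δ : Finset (Fin (n + 2))}
    (hΔ : Δ ∈ TermSet 𝔽 (cycleComplex n) (exampleFun n) 0 (endpointCycle 𝔽 n) ε) :
    Δ = closingEdge n := by
  obtain ⟨g, hg, hdist, hΔ⟩ := hΔ
  have hclose := abs_le.mp (hdist _ closingEdge_mem_faces)
  have hlast := abs_le.mp (hdist _ (pathEdge_mem_faces (Fin.last n)))
  rw [exampleFun_closingEdge hn] at hclose
  rw [exampleFun_pathEdge, Fin.val_last] at hlast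
  have hle : g (closingEdge n) ≤ g (pathEdge (Fin.last n)) := by linarith [hclose.1, hlast.2]
  exact hΔ.unique hg ⟨closingEdge_mem_faces, terminatesAt_closingEdge hle⟩

theorem termSet_exampleFun_eq_singleton (hn : 1 ≤ n) {ε : ℝ} (h0 : 0 ≤ ε)
    (hε : ε ≤ n + 1) :
    TermSet 𝔽 (cycleComplex n) (exampleFun n) 0 (endpointCycle 𝔽 n) ε = {closingEdge n} :=
  Set.eq_singleton_iff_unique_mem.mpr
    ⟨closingEdge_mem_termSet hn h0, fun _ hΔ => eq_closingEdge_of_mem_termSet hn hε hΔ⟩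

noncomputable def perturbedPath (n : ℕ) (i : Fin (n + 1)) (ε : ℝ) (j : Fin (n + 1)) : ℝ :=
  if j = i then 5 * (n + 1) else 5 * (n + 1) + 1 + (j : ℕ) - ε

noncomputable def examplePerturbation (n : ℕ) (i : Fin (n + 1)) (ε : ℝ) :
    Finset (Fin (n + 2)) → ℝ :=
  faceFun (fun v => (v : ℕ)) (perturbedPath n i ε) (4 * (n + 1) + ε)

section Perturbation

variable {i : Fin (n + 1)} {ε : ℝ}

theorem perturbedPath_self : perturbedPath n i ε i = 5 * (n + 1) := if_pos rfl

theorem perturbedPath_of_ne {j : Fin (n + 1)} (hj : j ≠ i) :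
    perturbedPath n i ε j = 5 * (n + 1) + 1 + (j : ℕ) - ε := if_neg hj

theorem perturbedPath_lt (h1 : n + 1 < ε) {j : Fin (n + 1)} (hj : j ≠ i) :
    perturbedPath n i ε j < 5 * (n + 1) := by
  rw [perturbedPath_of_ne hj]
  linarith [(by exact_mod_cast j.is_le : ((j : ℕ) : ℝ) ≤ n)]

theorem lt_perturbedPath (h2 : ε < n + 2) (j : Fin (n + 1)) :
    4 * ((n : ℝ) + 1) < perturbedPath n i ε j := by
  by_cases hj : j = i
  · rw [hj, perturbedPath_self]; linarith
  · rw [perturbedPath_of_ne hj]; linarith [(Nat.cast_nonneg _ : (0 : ℝ) ≤ (j : ℕ))]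

theorem isInjFiltration_examplePerturbation (hn : 1 ≤ n) (h1 : n + 1 < ε) (h2 : ε < n + 2) :
    IsInjFiltration (cycleComplex n) (examplePerturbation n i ε) := by
  refine isInjFiltration_faceFun hn (fun v w h => Fin.ext (by exact_mod_cast h))
    (fun j k h => ?_) (fun j => ?_)
    (fun v j => by linarith [cast_val_le v, lt_perturbedPath (i := i) h2 j])
    (fun v => by linarith [cast_val_le v])
  · by_cases hj : j = i <;> by_cases hk : k = i
    · rw [hj, hk]
    · rw [hj, perturbedPath_self] at h
      exact absurd h (perturbedPath_lt h1 hk).ne'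
    · rw [hk, perturbedPath_self] at h
      exact absurd h (perturbedPath_lt h1 hj).ne
    · rw [perturbedPath_of_ne hj, perturbedPath_of_ne hk] at h
      exact Fin.ext (by exact_mod_cast add_left_cancel (sub_left_inj.mp h))
  · by_cases hj : j = i
    · rw [hj, perturbedPath_self]
      exact (by linarith : 5 * ((n : ℝ) + 1) < _).ne
    · exact (by linarith [perturbedPath_lt h1 hj] : perturbedPath n i ε j < _).ne

theorem distLE_examplePerturbation (hn : 1 ≤ n) (h1 : n + 1 < ε) :
    DistLE (cycleComplex n) (exampleFun n) (examplePerturbation n i ε) ε := by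
  refine distLE_faceFun hn (fun v => by simpa using (by linarith : (0 : ℝ) ≤ ε)) (fun j => ?_)
    (by rw [sub_add_cancel_left, abs_neg, abs_of_pos (by linarith)])
  by_cases hj : j = i
  · rw [hj, perturbedPath_self, abs_le]
    constructor <;> linarith [(by exact_mod_cast i.is_le : ((i : ℕ) : ℝ) ≤ n),
      (Nat.cast_nonneg _ : (0 : ℝ) ≤ (i : ℕ))]
  · rw [perturbedPath_of_ne hj, abs_le]
    constructor <;> linarith

end Perturbation

theorem pathEdge_mem_termSet (hn : 1 ≤ n) {ε : ℝ} (h1 : n + 1 < ε) (h2 : ε < n + 2)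
    (i : Fin (n + 1)) :
    pathEdge i ∈ TermSet 𝔽 (cycleComplex n) (exampleFun n) 0 (endpointCycle 𝔽 n) ε := by
  refine ⟨examplePerturbation n i ε, isInjFiltration_examplePerturbation hn h1 h2,
    distLE_examplePerturbation hn h1, pathEdge_mem_faces i,
    terminatesAt_pathEdge (fun j => ?_) ?_⟩
  all_goals simp only [examplePerturbation, faceFun_pathEdge, faceFun_closingEdge hn,
    perturbedPath_self]
  · by_cases hj : j = i
    · rw [hj, perturbedPath_self]
    · exact (perturbedPath_lt h1 hj).le
  · linarith

theorem le_ncard_termSet (hn : 1 ≤ n) {ε : ℝ} (h1 : n + 1 < ε) (h2 : ε < n + 2) :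
    n + 2 ≤ (TermSet 𝔽 (cycleComplex n) (exampleFun n) 0 (endpointCycle 𝔽 n) ε).ncard := by
  have hsub : insert (closingEdge n) (Set.range pathEdge) ⊆
      TermSet 𝔽 (cycleComplex n) (exampleFun n) 0 (endpointCycle 𝔽 n) ε :=
    Set.insert_subset (closingEdge_mem_termSet hn (by linarith))
      (Set.range_subset_iff.mpr (pathEdge_mem_termSet hn h1 h2))
  calc n + 2 = (insert (closingEdge n) (Set.range (pathEdge (n := n)))).ncard := by
        rw [Set.ncard_insert_of_notMem
            (by rintro ⟨i, hi⟩; exact closingEdge_ne_pathEdge hn i hi.symm),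
          Set.ncard_range_of_injective pathEdge_injective, Nat.card_eq_fintype_card,
          Fintype.card_fin]
    _ ≤ _ := Set.ncard_le_ncard hsub (termSet_finite ε)

end CycleGraph

open CycleGraph

/-- Example `example6`: on a cycle graph with `n + 2`
vertices, `|Σ_ε|` can jump from `1` to `n + 2`. -/
theorem stmt16 :
    ∀ n : ℕ, 1 ≤ n →
      ∃ (K : SComplex (Fin (n + 2))) (f : Finset (Fin (n + 2)) → ℝ)
        (α : Finset (Fin (n + 2)) →₀ ℚ) (a b t₀ : ℝ),
        K.faces =
          (Finset.univ.image fun i : Fin (n + 2) => ({i} : Finset (Fin (n + 2)))) ∪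
          (Finset.univ.image fun i : Fin (n + 2) => ({i, i + 1} : Finset (Fin (n + 2)))) ∧
        IsInjFiltration K f ∧
        BornAt ℚ K f 0 α a ∧ TerminatesAt ℚ K f 0 α b ∧
        0 < t₀ ∧ t₀ < (b - a) / 2 ∧
        (∀ ε : ℝ, 0 < ε → ε ≤ t₀ → (TermSet ℚ K f 0 α ε).ncard = 1) ∧
        (∃ δ > 0, ∀ ε : ℝ, t₀ < ε → ε < t₀ + δ →
          ε < (b - a) / 2 ∧ n + 2 ≤ (TermSet ℚ K f 0 α ε).ncard) := by
  intro n hn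
  have hn' : (1 : ℝ) ≤ n := by exact_mod_cast hn
  refine ⟨cycleComplex n, exampleFun n, endpointCycle ℚ n, n + 1, 4 * (n + 1), n + 1, rfl,
    isInjFiltration_exampleFun hn, bornAt_exampleFun hn, terminatesAt_exampleFun hn,
    by positivity, by linarith, fun ε h0 hε => ?_, 1, one_pos, fun ε h1 h2 => ?_⟩
  · rw [termSet_exampleFun_eq_singleton hn h0.le hε, Set.ncard_singleton]
  · exact ⟨by linarith, le_ncard_termSet hn h1 (by linarith)⟩
end
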